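/- arXiv:1807.02202 — 3 statements merged into one kernel-verified Lean document; each statement's English description precedes it below -/
import Mathlib

section
/- In the i.i.d. bivariate Gaussian model (Y_i, G_i) with E[Y_i] = μ, E[G_i] = 0, Var(Y_i) = σ_f² + σ_a², Var(G_i) = 1, Cov(Y_i, G_i) = α (all known except μ), the estimator μ̂_cv = (1/n) Σᵢ (Y_i − α G_i) is the unique minimum-variance unbiased estimator of μ: any unbiased estimator of μ that is a function of (Y_i, G_i)_{i=1}^n has variance at least Var(μ̂_cv) = (σ_f²(1 − ρ²) + σ_a²)/n, where ρ = α/σ_f. -/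
open MeasureTheory ProbabilityTheory
open scoped ENNReal NNReal

/-- The bivariate Gaussian density of `(Y, G)` with `E Y = μ`, `E G = 0`,
`Var Y = sf2 + sa2`, `Var G = 1`, `Cov(Y, G) = α`. -/
noncomputable def biGaussPdf (sf2 sa2 α μ : ℝ) (p : ℝ × ℝ) : ℝ :=
  (1 / (2 * Real.pi * Real.sqrt (sf2 + sa2 - α ^ 2))) *
    Real.exp (-(1 / 2) * (1 / (sf2 + sa2 - α ^ 2)) *
      ((p.1 - μ) ^ 2 - 2 * α * (p.1 - μ) * p.2 + (sf2 + sa2) * p.2 ^ 2))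

/-- The law of `n` i.i.d. draws from the bivariate Gaussian model. -/
noncomputable def biGaussModel (sf2 sa2 α μ : ℝ) (n : ℕ) :
    Measure (Fin n → ℝ × ℝ) :=
  (volume : Measure (Fin n → ℝ × ℝ)).withDensity
    (fun data => ENNReal.ofReal (∏ i, biGaussPdf sf2 sa2 α μ (data i)))

/-- The control variates estimator `μ̂_cv = (1/n) Σᵢ (Yᵢ − α Gᵢ)`. -/
noncomputable def cvEstimator (α : ℝ) (n : ℕ) (data : Fin n → ℝ × ℝ) : ℝ :=
  (n : ℝ)⁻¹ * ∑ i, ((data i).1 - α * (data i).2)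

open Real

namespace CVAux

variable {sf2 sa2 α : ℝ}

lemma measurable_biGaussPdf (μ : ℝ) : Measurable (biGaussPdf sf2 sa2 α μ) := by
  unfold biGaussPdf; fun_prop

lemma biGaussPdf_nonneg (μ : ℝ) (p : ℝ × ℝ) : 0 ≤ biGaussPdf sf2 sa2 α μ p := by
  unfold biGaussPdf
  have := Real.pi_pos
  positivity

lemma biGaussPdf_factor (hD : 0 < sf2 + sa2 - α ^ 2) (μ : ℝ) (p : ℝ × ℝ) :
    biGaussPdf sf2 sa2 α μ p =
      gaussianPDFReal (μ + α * p.2) (sf2 + sa2 - α ^ 2).toNNReal p.1 *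
        gaussianPDFReal 0 1 p.2 := by
  obtain ⟨y, g⟩ := p
  have hπ : (0:ℝ) < 2 * Real.pi := by positivity
  have hc : ((sf2 + sa2 - α ^ 2).toNNReal : ℝ) = sf2 + sa2 - α ^ 2 := Real.coe_toNNReal _ hD.le
  simp only [gaussianPDFReal, biGaussPdf, hc, NNReal.coe_one]
  rw [mul_mul_mul_comm, ← Real.exp_add]
  congr 1
  · rw [Real.sqrt_mul hπ.le, mul_one, one_div, ← mul_inv]
    congr 1
    linear_combination (-Real.sqrt (sf2 + sa2 - α ^ 2)) * Real.sq_sqrt hπ.le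
  · have hD' : sf2 + sa2 - α ^ 2 ≠ 0 := ne_of_gt hD
    field_simp
    ring

end CVAux

namespace CVAux2
open CVAux

variable {sf2 sa2 α : ℝ}

lemma lintegral_biGaussPdf (hD : 0 < sf2 + sa2 - α ^ 2) (μ : ℝ) :
    ∫⁻ p : ℝ × ℝ, ENNReal.ofReal (biGaussPdf sf2 sa2 α μ p) = 1 := by
  have hv : (sf2 + sa2 - α ^ 2).toNNReal ≠ 0 := (Real.toNNReal_pos.2 hD).ne'
  rw [Measure.volume_eq_prod,
    lintegral_prod_symm (fun p : ℝ × ℝ => ENNReal.ofReal (biGaussPdf sf2 sa2 α μ p))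
      ((measurable_biGaussPdf μ).ennreal_ofReal.aemeasurable)]
  have : ∀ g : ℝ, (∫⁻ y : ℝ, ENNReal.ofReal (biGaussPdf sf2 sa2 α μ (y, g)))
      = ENNReal.ofReal (gaussianPDFReal 0 1 g) := by
    intro g
    have : ∀ y : ℝ, ENNReal.ofReal (biGaussPdf sf2 sa2 α μ (y, g))
        = ENNReal.ofReal (gaussianPDFReal (μ + α * g) (sf2 + sa2 - α ^ 2).toNNReal y)
          * ENNReal.ofReal (gaussianPDFReal 0 1 g) := by
      intro y
      rw [biGaussPdf_factor hD μ (y, g), ENNReal.ofReal_mul (gaussianPDFReal_nonneg _ _ _)]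
    simp_rw [this]
    rw [lintegral_mul_const' _ _ ENNReal.ofReal_ne_top,
      lintegral_gaussianPDFReal_eq_one _ hv, one_mul]
  simp_rw [this]
  exact lintegral_gaussianPDFReal_eq_one 0 one_ne_zero

lemma integrable_biGaussPdf (hD : 0 < sf2 + sa2 - α ^ 2) (μ : ℝ) :
    Integrable (biGaussPdf sf2 sa2 α μ) := by
  refine ⟨(measurable_biGaussPdf μ).aestronglyMeasurable, ?_⟩
  rw [hasFiniteIntegral_def]
  have h1 : (∫⁻ p, ‖biGaussPdf sf2 sa2 α μ p‖ₑ)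
      = ∫⁻ p : ℝ × ℝ, ENNReal.ofReal (biGaussPdf sf2 sa2 α μ p) := by
    congr 1
    ext p
    exact Real.enorm_eq_ofReal (biGaussPdf_nonneg _ _)
  rw [h1, lintegral_biGaussPdf hD μ]
  exact ENNReal.one_lt_top

lemma integral_biGaussPdf (hD : 0 < sf2 + sa2 - α ^ 2) (μ : ℝ) :
    ∫ p : ℝ × ℝ, biGaussPdf sf2 sa2 α μ p = 1 := by
  have h := lintegral_biGaussPdf hD μ
  rw [← ofReal_integral_eq_lintegral_ofReal (integrable_biGaussPdf hD μ)
    (ae_of_all _ (biGaussPdf_nonneg _)), ← ENNReal.ofReal_one,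
    ENNReal.ofReal_eq_ofReal_iff (integral_nonneg (biGaussPdf_nonneg _)) zero_le_one] at h
  exact h

end CVAux2

namespace CVAux3
open CVAux CVAux2

noncomputable def pdfN (sf2 sa2 α μ : ℝ) (n : ℕ) (d : Fin n → ℝ × ℝ) : ℝ :=
  ∏ i, biGaussPdf sf2 sa2 α μ (d i)

noncomputable def Tsum (α : ℝ) (n : ℕ) (d : Fin n → ℝ × ℝ) : ℝ :=
  ∑ i, ((d i).1 - α * (d i).2)

variable {sf2 sa2 α : ℝ} {n : ℕ}

lemma measurable_pdfN (μ : ℝ) : Measurable (pdfN sf2 sa2 α μ n) :=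
  Finset.measurable_prod _ fun i _ =>
    (measurable_biGaussPdf μ).comp (measurable_pi_apply i)

lemma pdfN_nonneg (μ : ℝ) (d : Fin n → ℝ × ℝ) : 0 ≤ pdfN sf2 sa2 α μ n d :=
  Finset.prod_nonneg fun i _ => biGaussPdf_nonneg μ (d i)

lemma measurable_Tsum : Measurable (Tsum α n) :=
  Finset.measurable_sum _ fun i _ => by fun_prop

lemma model_eq (μ : ℝ) :
    biGaussModel sf2 sa2 α μ n = (volume : Measure (Fin n → ℝ × ℝ)).withDensity
      (fun d => ((pdfN sf2 sa2 α μ n d).toNNReal : ℝ≥0∞)) := rfl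

lemma integral_model (μ : ℝ) (G : (Fin n → ℝ × ℝ) → ℝ) :
    ∫ d, G d ∂(biGaussModel sf2 sa2 α μ n)
      = ∫ d, pdfN sf2 sa2 α μ n d * G d := by
  rw [model_eq, integral_withDensity_eq_integral_smul
    ((measurable_pdfN μ).real_toNNReal) G]
  congr 1
  ext d
  simp [NNReal.smul_def, Real.coe_toNNReal _ (pdfN_nonneg μ d)]

lemma integrable_model_iff (μ : ℝ) {G : (Fin n → ℝ × ℝ) → ℝ} :
    Integrable G (biGaussModel sf2 sa2 α μ n)
      ↔ Integrable (fun d => pdfN sf2 sa2 α μ n d * G d) volume := by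
  rw [model_eq, integrable_withDensity_iff_integrable_smul
    ((measurable_pdfN μ).real_toNNReal)]
  constructor <;> intro h <;> refine h.congr (ae_of_all _ fun d => ?_) <;>
    simp [NNReal.smul_def, Real.coe_toNNReal _ (pdfN_nonneg μ d)]

lemma integral_pdfN (hD : 0 < sf2 + sa2 - α ^ 2) (μ : ℝ) :
    ∫ d, pdfN sf2 sa2 α μ n d = 1 := by
  rw [show (fun d => pdfN sf2 sa2 α μ n d) = fun d : Fin n → ℝ × ℝ =>
      ∏ i, biGaussPdf sf2 sa2 α μ (d i) from rfl]
  rw [integral_fintype_prod_volume_eq_pow (𝕜 := ℝ) (ι := Fin n) (biGaussPdf sf2 sa2 α μ),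
    integral_biGaussPdf hD μ, one_pow]

lemma integrable_pdfN (hD : 0 < sf2 + sa2 - α ^ 2) (μ : ℝ) :
    Integrable (pdfN sf2 sa2 α μ n) volume :=
  Integrable.fintype_prod (E := ℝ × ℝ) (f := fun _ : Fin n => biGaussPdf sf2 sa2 α μ)
    (fun _ => integrable_biGaussPdf hD μ)

instance : SigmaFinite (volume : Measure (Fin n → ℝ × ℝ)) := by infer_instance

lemma isProbability_model (hD : 0 < sf2 + sa2 - α ^ 2) (μ : ℝ) :
    IsProbabilityMeasure (biGaussModel sf2 sa2 α μ n) := by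
  constructor
  rw [biGaussModel, withDensity_apply _ MeasurableSet.univ, Measure.restrict_univ]
  rw [show (fun data : Fin n → ℝ × ℝ => ENNReal.ofReal (∏ i, biGaussPdf sf2 sa2 α μ (data i)))
    = fun d => ENNReal.ofReal (pdfN sf2 sa2 α μ n d) from rfl]
  rw [← ofReal_integral_eq_lintegral_ofReal (integrable_pdfN hD μ)
      (ae_of_all _ (pdfN_nonneg μ)), integral_pdfN hD μ, ENNReal.ofReal_one]

end CVAux3

namespace CVAux4
open CVAux CVAux2 CVAux3

variable {sf2 sa2 α : ℝ} {n : ℕ}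

lemma biGaussPdf_tilt (hD : 0 < sf2 + sa2 - α ^ 2) (s μ : ℝ) (p : ℝ × ℝ) :
    Real.exp (s * (p.1 - α * p.2)) * biGaussPdf sf2 sa2 α μ p
      = Real.exp (s * μ + s ^ 2 * (sf2 + sa2 - α ^ 2) / 2) *
          biGaussPdf sf2 sa2 α (μ + s * (sf2 + sa2 - α ^ 2)) p := by
  unfold biGaussPdf
  rw [mul_left_comm, ← Real.exp_add, mul_left_comm, ← Real.exp_add]
  congr 1
  have hD' : sf2 + sa2 - α ^ 2 ≠ 0 := ne_of_gt hD
  field_simp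
  ring

lemma pdfN_tilt (hD : 0 < sf2 + sa2 - α ^ 2) (s μ : ℝ) (d : Fin n → ℝ × ℝ) :
    Real.exp (s * Tsum α n d) * pdfN sf2 sa2 α μ n d
      = Real.exp (n * (s * μ + s ^ 2 * (sf2 + sa2 - α ^ 2) / 2)) *
          pdfN sf2 sa2 α (μ + s * (sf2 + sa2 - α ^ 2)) n d := by
  calc Real.exp (s * Tsum α n d) * pdfN sf2 sa2 α μ n d
      = ∏ i, (Real.exp (s * ((d i).1 - α * (d i).2)) * biGaussPdf sf2 sa2 α μ (d i)) := by
        rw [Tsum, Finset.mul_sum, Real.exp_sum, pdfN, ← Finset.prod_mul_distrib]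
    _ = ∏ i, (Real.exp (s * μ + s ^ 2 * (sf2 + sa2 - α ^ 2) / 2) *
          biGaussPdf sf2 sa2 α (μ + s * (sf2 + sa2 - α ^ 2)) (d i)) := by
        simp_rw [biGaussPdf_tilt hD s μ]
    _ = _ := by
        rw [Finset.prod_mul_distrib, Finset.prod_const, Finset.card_univ, Fintype.card_fin,
          ← Real.exp_nat_mul, pdfN]

end CVAux4

namespace CVAux5
open CVAux CVAux2 CVAux3 CVAux4

variable {sf2 sa2 α : ℝ} {n : ℕ}

lemma pdfN_tilt' (hD : 0 < sf2 + sa2 - α ^ 2) (s μ : ℝ) (G : (Fin n → ℝ × ℝ) → ℝ)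
    (d : Fin n → ℝ × ℝ) :
    pdfN sf2 sa2 α μ n d * (G d * Real.exp (s * Tsum α n d))
      = Real.exp (n * (s * μ + s ^ 2 * (sf2 + sa2 - α ^ 2) / 2)) *
          (pdfN sf2 sa2 α (μ + s * (sf2 + sa2 - α ^ 2)) n d * G d) := by
  have h := pdfN_tilt hD s μ d
  linear_combination G d * h

lemma integrable_tilt_iff (hD : 0 < sf2 + sa2 - α ^ 2) (s μ : ℝ)
    {G : (Fin n → ℝ × ℝ) → ℝ} :
    Integrable (fun d => G d * Real.exp (s * Tsum α n d)) (biGaussModel sf2 sa2 α μ n)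
      ↔ Integrable G (biGaussModel sf2 sa2 α (μ + s * (sf2 + sa2 - α ^ 2)) n) := by
  rw [integrable_model_iff, integrable_model_iff]
  simp_rw [pdfN_tilt' hD s μ G]
  rw [integrable_const_mul_iff (isUnit_iff_ne_zero.2 (Real.exp_ne_zero _))]

lemma integral_tilt (hD : 0 < sf2 + sa2 - α ^ 2) (s μ : ℝ) (G : (Fin n → ℝ × ℝ) → ℝ) :
    ∫ d, G d * Real.exp (s * Tsum α n d) ∂(biGaussModel sf2 sa2 α μ n)
      = Real.exp (n * (s * μ + s ^ 2 * (sf2 + sa2 - α ^ 2) / 2)) *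
          ∫ d, G d ∂(biGaussModel sf2 sa2 α (μ + s * (sf2 + sa2 - α ^ 2)) n) := by
  rw [integral_model, integral_model]
  simp_rw [pdfN_tilt' hD s μ G]
  rw [integral_const_mul]

lemma integrable_exp_tilt (hD : 0 < sf2 + sa2 - α ^ 2) (s μ : ℝ) :
    Integrable (fun d => Real.exp (s * Tsum α n d)) (biGaussModel sf2 sa2 α μ n) := by
  haveI := isProbability_model (n := n) hD (μ + s * (sf2 + sa2 - α ^ 2))
  have h := (integrable_tilt_iff (n := n) (G := fun _ => (1:ℝ)) hD s μ).2 (integrable_const 1)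
  simpa using h

lemma integral_exp_tilt (hD : 0 < sf2 + sa2 - α ^ 2) (s μ : ℝ) :
    ∫ d, Real.exp (s * Tsum α n d) ∂(biGaussModel sf2 sa2 α μ n)
      = Real.exp (n * (s * μ + s ^ 2 * (sf2 + sa2 - α ^ 2) / 2)) := by
  haveI := isProbability_model (n := n) hD (μ + s * (sf2 + sa2 - α ^ 2))
  have h := integral_tilt (n := n) hD s μ (fun _ => (1:ℝ))
  simpa using h

end CVAux5

namespace CVAux6
open CVAux CVAux2 CVAux3 CVAux4 CVAux5 Metric

variable {sf2 sa2 α : ℝ} {n : ℕ}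

lemma abs_mul_exp_le (x s s₀ : ℝ) (hs : |s - s₀| ≤ 1) :
    |x| * Real.exp (s * x) ≤ Real.exp ((s₀ + 2) * x) + Real.exp ((s₀ - 2) * x) := by
  have h1 : |x| ≤ Real.exp |x| := (le_add_of_nonneg_right zero_le_one).trans
    (Real.add_one_le_exp |x|)
  have h2 : s * x ≤ s₀ * x + |x| := by
    have : (s - s₀) * x ≤ |x| := by
      calc (s - s₀) * x ≤ |(s - s₀) * x| := le_abs_self _
        _ = |s - s₀| * |x| := abs_mul _ _
        _ ≤ 1 * |x| := by gcongr
        _ = |x| := one_mul _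
    nlinarith
  calc |x| * Real.exp (s * x)
      ≤ Real.exp |x| * Real.exp (s₀ * x + |x|) := by
        apply mul_le_mul h1 (Real.exp_le_exp.2 h2) (Real.exp_pos _).le (Real.exp_pos _).le
    _ = Real.exp (s₀ * x + 2 * |x|) := by rw [← Real.exp_add]; ring_nf
    _ ≤ Real.exp ((s₀ + 2) * x) + Real.exp ((s₀ - 2) * x) := by
        rcases abs_cases x with ⟨h, _⟩ | ⟨h, _⟩
        · rw [h]
          apply le_add_of_le_of_nonneg (Real.exp_le_exp.2 (by ring_nf; exact le_rfl))
            (Real.exp_pos _).le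
        · rw [h]
          refine le_add_of_nonneg_of_le (Real.exp_pos _).le
            (Real.exp_le_exp.2 (by ring_nf; exact le_rfl))

lemma hasDerivAt_model_integral (hD : 0 < sf2 + sa2 - α ^ 2) (μ : ℝ)
    {V : (Fin n → ℝ × ℝ) → ℝ} (hVmeas : Measurable V)
    (hV : ∀ a : ℝ, Integrable (fun d => V d * Real.exp (a * Tsum α n d))
      (biGaussModel sf2 sa2 α μ n)) (s₀ : ℝ) :
    Integrable (fun d => V d * Tsum α n d * Real.exp (s₀ * Tsum α n d))
        (biGaussModel sf2 sa2 α μ n) ∧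
      HasDerivAt (fun s => ∫ d, V d * Real.exp (s * Tsum α n d)
          ∂(biGaussModel sf2 sa2 α μ n))
        (∫ d, V d * Tsum α n d * Real.exp (s₀ * Tsum α n d)
          ∂(biGaussModel sf2 sa2 α μ n)) s₀ := by
  have hb1 : Integrable (fun d => |V d| * Real.exp ((s₀ + 2) * Tsum α n d))
      (biGaussModel sf2 sa2 α μ n) := by
    have := (hV (s₀ + 2)).abs
    refine this.congr (ae_of_all _ fun d => ?_)
    simp [abs_mul, Real.abs_exp]
  have hb2 : Integrable (fun d => |V d| * Real.exp ((s₀ - 2) * Tsum α n d))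
      (biGaussModel sf2 sa2 α μ n) := by
    have := (hV (s₀ - 2)).abs
    refine this.congr (ae_of_all _ fun d => ?_)
    simp [abs_mul, Real.abs_exp]
  refine hasDerivAt_integral_of_dominated_loc_of_deriv_le (s := Metric.ball s₀ 1)
    (F := fun s d => V d * Real.exp (s * Tsum α n d))
    (F' := fun s d => V d * Tsum α n d * Real.exp (s * Tsum α n d))
    (bound := fun d => |V d| * Real.exp ((s₀ + 2) * Tsum α n d)
      + |V d| * Real.exp ((s₀ - 2) * Tsum α n d))
    (Metric.ball_mem_nhds s₀ one_pos)
    (Filter.Eventually.of_forall fun s =>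
      (hVmeas.mul ((measurable_Tsum.const_mul s).exp)).aestronglyMeasurable)
    (hV s₀)
    ((hVmeas.mul measurable_Tsum).mul
      ((measurable_Tsum.const_mul s₀).exp)).aestronglyMeasurable
    (ae_of_all _ fun d s hs => ?_) (hb1.add hb2) (ae_of_all _ fun d s _hs => ?_)
  · have hs' : |s - s₀| ≤ 1 := le_of_lt (by rwa [mem_ball, Real.dist_eq] at hs)
    calc ‖V d * Tsum α n d * Real.exp (s * Tsum α n d)‖
        = |V d| * (|Tsum α n d| * Real.exp (s * Tsum α n d)) := by
          rw [Real.norm_eq_abs, abs_mul, abs_mul, Real.abs_exp, mul_assoc]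
      _ ≤ |V d| * (Real.exp ((s₀ + 2) * Tsum α n d) + Real.exp ((s₀ - 2) * Tsum α n d)) := by
          gcongr
          exact abs_mul_exp_le _ s s₀ hs'
      _ = |V d| * Real.exp ((s₀ + 2) * Tsum α n d) + |V d| * Real.exp ((s₀ - 2) * Tsum α n d) := by
          ring
  · have h1 : HasDerivAt (fun u : ℝ => u * Tsum α n d) (Tsum α n d) s :=
      hasDerivAt_mul_const _
    have h2 := ((Real.hasDerivAt_exp (s * Tsum α n d)).comp s h1).const_mul (V d)
    have h3 : V d * (Real.exp (s * Tsum α n d) * Tsum α n d)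
        = V d * Tsum α n d * Real.exp (s * Tsum α n d) := by ring
    rw [h3] at h2
    exact h2

end CVAux6

namespace CVAux7
open CVAux CVAux2 CVAux3 CVAux4 CVAux5 CVAux6

variable {sf2 sa2 α : ℝ} {n : ℕ}

lemma hasDerivAt_mgf (s μ : ℝ) (D : ℝ) :
    HasDerivAt (fun s : ℝ => Real.exp (n * (s * μ + s ^ 2 * D / 2)))
      ((n * (μ + s * D)) * Real.exp (n * (s * μ + s ^ 2 * D / 2))) s := by
  have h1 : HasDerivAt (fun s : ℝ => n * (s * μ + s ^ 2 * D / 2))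
      (n * (μ + 2 * s ^ 1 * D / 2)) s := by
    exact (((hasDerivAt_mul_const μ).add
      (((hasDerivAt_pow 2 s).mul_const D).div_const 2))).const_mul (n : ℝ)
  have h2 := h1.exp
  have h3 : (n : ℝ) * (μ + 2 * s ^ 1 * D / 2) = n * (μ + s * D) := by ring
  rw [h3] at h2
  simpa [mul_comm] using h2

lemma integrable_Tsum_exp (hD : 0 < sf2 + sa2 - α ^ 2) (μ : ℝ) (s : ℝ) :
    Integrable (fun d => Tsum α n d * Real.exp (s * Tsum α n d))
      (biGaussModel sf2 sa2 α μ n) := by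
  have h := (hasDerivAt_model_integral (n := n) hD μ (V := fun _ => (1:ℝ)) measurable_const
    (fun a => by simpa using integrable_exp_tilt (n := n) hD a μ) s).1
  simpa using h

lemma integral_Tsum_exp (hD : 0 < sf2 + sa2 - α ^ 2) (μ : ℝ) (s : ℝ) :
    ∫ d, Tsum α n d * Real.exp (s * Tsum α n d) ∂(biGaussModel sf2 sa2 α μ n)
      = (n * (μ + s * (sf2 + sa2 - α ^ 2))) *
          Real.exp (n * (s * μ + s ^ 2 * (sf2 + sa2 - α ^ 2) / 2)) := by
  have h := (hasDerivAt_model_integral (n := n) hD μ (V := fun _ => (1:ℝ)) measurable_const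
    (fun a => by simpa using integrable_exp_tilt (n := n) hD a μ) s).2
  have heq : (fun s : ℝ => ∫ d, (fun _ => (1:ℝ)) d * Real.exp (s * Tsum α n d)
      ∂(biGaussModel sf2 sa2 α μ n))
      = fun s : ℝ => Real.exp (n * (s * μ + s ^ 2 * (sf2 + sa2 - α ^ 2) / 2)) := by
    funext u
    simpa using integral_exp_tilt (n := n) hD u μ
  rw [heq] at h
  have h2 := hasDerivAt_mgf (n := n) s μ (sf2 + sa2 - α ^ 2)
  have huniq := h2.unique h
  have h4 : ∫ d, Tsum α n d * Real.exp (s * Tsum α n d) ∂(biGaussModel sf2 sa2 α μ n)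
      = ∫ d, 1 * Tsum α n d * Real.exp (s * Tsum α n d) ∂(biGaussModel sf2 sa2 α μ n) := by
    congr 1
    funext d
    ring
  rw [h4, ← huniq]

lemma integrable_Tsum_sq_exp (hD : 0 < sf2 + sa2 - α ^ 2) (μ : ℝ) :
    Integrable (fun d => Tsum α n d * Tsum α n d * Real.exp (0 * Tsum α n d))
      (biGaussModel sf2 sa2 α μ n) :=
  (hasDerivAt_model_integral (n := n) hD μ measurable_Tsum
    (fun a => integrable_Tsum_exp (n := n) hD μ a) 0).1

lemma integral_Tsum (hD : 0 < sf2 + sa2 - α ^ 2) (μ : ℝ) :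
    ∫ d, Tsum α n d ∂(biGaussModel sf2 sa2 α μ n) = n * μ := by
  have h := integral_Tsum_exp (n := n) hD μ 0
  simpa using h

lemma integrable_Tsum (hD : 0 < sf2 + sa2 - α ^ 2) (μ : ℝ) :
    Integrable (Tsum α n) (biGaussModel sf2 sa2 α μ n) := by
  have h := integrable_Tsum_exp (n := n) hD μ 0
  exact h.congr (ae_of_all _ fun d => by simp)

lemma integral_Tsum_sq (hD : 0 < sf2 + sa2 - α ^ 2) (μ : ℝ) :
    ∫ d, Tsum α n d ^ 2 ∂(biGaussModel sf2 sa2 α μ n)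
      = n * (sf2 + sa2 - α ^ 2) + (n * μ) ^ 2 := by
  have h := (hasDerivAt_model_integral (n := n) hD μ measurable_Tsum
    (fun a => integrable_Tsum_exp (n := n) hD μ a) 0).2
  have heq : (fun s : ℝ => ∫ d, Tsum α n d * Real.exp (s * Tsum α n d)
      ∂(biGaussModel sf2 sa2 α μ n))
      = fun s : ℝ => (n * (μ + s * (sf2 + sa2 - α ^ 2))) *
          Real.exp (n * (s * μ + s ^ 2 * (sf2 + sa2 - α ^ 2) / 2)) := by
    funext u
    exact integral_Tsum_exp (n := n) hD μ u
  rw [heq] at h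
  have h2 : HasDerivAt (fun s : ℝ => (n * (μ + s * (sf2 + sa2 - α ^ 2))) *
      Real.exp (n * (s * μ + s ^ 2 * (sf2 + sa2 - α ^ 2) / 2)))
      ((n * (sf2 + sa2 - α ^ 2)) * Real.exp (n * (0 * μ + 0 ^ 2 * (sf2 + sa2 - α ^ 2) / 2))
        + (n * (μ + 0 * (sf2 + sa2 - α ^ 2))) *
          ((n * (μ + 0 * (sf2 + sa2 - α ^ 2))) *
            Real.exp (n * (0 * μ + 0 ^ 2 * (sf2 + sa2 - α ^ 2) / 2)))) 0 := by
    have ha : HasDerivAt (fun s : ℝ => (n : ℝ) * (μ + s * (sf2 + sa2 - α ^ 2)))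
        (n * (sf2 + sa2 - α ^ 2)) 0 :=
      ((hasDerivAt_mul_const (sf2 + sa2 - α ^ 2)).const_add μ).const_mul (n : ℝ)
    exact ha.mul (hasDerivAt_mgf (n := n) 0 μ (sf2 + sa2 - α ^ 2))
  have huniq := h2.unique h
  have : ∫ d, Tsum α n d * Tsum α n d * Real.exp (0 * Tsum α n d)
      ∂(biGaussModel sf2 sa2 α μ n) = ∫ d, Tsum α n d ^ 2 ∂(biGaussModel sf2 sa2 α μ n) := by
    congr 1
    funext d
    simp [sq]
  rw [this] at huniq
  rw [← huniq]
  simp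
  ring

lemma integrable_Tsum_sq (hD : 0 < sf2 + sa2 - α ^ 2) (μ : ℝ) :
    Integrable (fun d => Tsum α n d ^ 2) (biGaussModel sf2 sa2 α μ n) :=
  (integrable_Tsum_sq_exp (n := n) hD μ).congr (ae_of_all _ fun d => by simp [sq])

lemma memLp_Tsum (hD : 0 < sf2 + sa2 - α ^ 2) (μ : ℝ) :
    MemLp (Tsum α n) 2 (biGaussModel sf2 sa2 α μ n) := by
  haveI := isProbability_model (n := n) hD μ
  exact (memLp_two_iff_integrable_sq measurable_Tsum.aestronglyMeasurable).2
    (integrable_Tsum_sq hD μ)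

end CVAux7

namespace CVAux8
open CVAux CVAux2 CVAux3 CVAux4 CVAux5 CVAux6 CVAux7

variable {sf2 sa2 α : ℝ} {n : ℕ}

lemma cv_eq (d : Fin n → ℝ × ℝ) : cvEstimator α n d = (n : ℝ)⁻¹ * Tsum α n d := rfl

lemma measurable_cv : Measurable (cvEstimator α n) := measurable_Tsum.const_mul _

lemma memLp_cv (hD : 0 < sf2 + sa2 - α ^ 2) (μ : ℝ) :
    MemLp (cvEstimator α n) 2 (biGaussModel sf2 sa2 α μ n) :=
  (memLp_Tsum (n := n) hD μ).const_mul ((n : ℝ)⁻¹)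

lemma integrable_cv (hD : 0 < sf2 + sa2 - α ^ 2) (μ : ℝ) :
    Integrable (cvEstimator α n) (biGaussModel sf2 sa2 α μ n) :=
  (integrable_Tsum (n := n) hD μ).const_mul _

lemma integral_cv (hD : 0 < sf2 + sa2 - α ^ 2) (hn : 0 < n) (μ : ℝ) :
    ∫ d, cvEstimator α n d ∂(biGaussModel sf2 sa2 α μ n) = μ := by
  have hn' : (n : ℝ) ≠ 0 := Nat.cast_ne_zero.2 hn.ne'
  simp_rw [cv_eq]
  rw [integral_const_mul, integral_Tsum (n := n) hD μ]
  field_simp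

lemma variance_cv (hD : 0 < sf2 + sa2 - α ^ 2) (hn : 0 < n) (μ : ℝ) :
    variance (cvEstimator α n) (biGaussModel sf2 sa2 α μ n)
      = (sf2 + sa2 - α ^ 2) / n := by
  have hn' : (n : ℝ) ≠ 0 := Nat.cast_ne_zero.2 hn.ne'
  haveI := isProbability_model (n := n) hD μ
  rw [variance_eq_sub (memLp_cv hD μ)]
  have h1 : ∫ d, (cvEstimator α n ^ 2) d ∂(biGaussModel sf2 sa2 α μ n)
      = (n : ℝ)⁻¹ ^ 2 * ∫ d, Tsum α n d ^ 2 ∂(biGaussModel sf2 sa2 α μ n) := by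
    rw [← integral_const_mul]
    congr 1
    funext d
    simp [cv_eq, mul_pow]
  rw [h1, integral_Tsum_sq (n := n) hD μ, integral_cv hD hn μ]
  field_simp
  ring

lemma key_orth (hD : 0 < sf2 + sa2 - α ^ 2) (hn : 0 < n)
    {est : (Fin n → ℝ × ℝ) → ℝ} (hmeas : Measurable est)
    (hL2 : ∀ μ : ℝ, MemLp est 2 (biGaussModel sf2 sa2 α μ n))
    (hub : ∀ μ : ℝ, ∫ d, est d ∂(biGaussModel sf2 sa2 α μ n) = μ) (μ : ℝ) :
    ∫ d, (est d - cvEstimator α n d) * Tsum α n d ∂(biGaussModel sf2 sa2 α μ n) = 0 := by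
  set U : (Fin n → ℝ × ℝ) → ℝ := fun d => est d - cvEstimator α n d with hU
  have hUmeas : Measurable U := hmeas.sub measurable_cv
  have hUint : ∀ μ' : ℝ, Integrable U (biGaussModel sf2 sa2 α μ' n) := fun μ' => by
    haveI := isProbability_model (n := n) hD μ'
    exact ((hL2 μ').integrable one_le_two).sub (integrable_cv hD μ')
  have hUzero : ∀ μ' : ℝ, ∫ d, U d ∂(biGaussModel sf2 sa2 α μ' n) = 0 := fun μ' => by
    haveI := isProbability_model (n := n) hD μ'
    rw [hU]
    rw [integral_sub ((hL2 μ').integrable one_le_two) (integrable_cv hD μ')]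
    rw [hub μ', integral_cv hD hn μ', sub_self]
  have hV : ∀ a : ℝ, Integrable (fun d => U d * Real.exp (a * Tsum α n d))
      (biGaussModel sf2 sa2 α μ n) := fun a =>
    (integrable_tilt_iff (n := n) hD a μ).2 (hUint _)
  obtain ⟨hint, hder⟩ := hasDerivAt_model_integral (n := n) hD μ hUmeas hV 0
  have hg : (fun s : ℝ => ∫ d, U d * Real.exp (s * Tsum α n d)
      ∂(biGaussModel sf2 sa2 α μ n)) = fun _ => (0 : ℝ) := by
    funext s
    rw [integral_tilt (n := n) hD s μ U, hUzero, mul_zero]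
  rw [hg] at hder
  have h0 : ∫ d, U d * Tsum α n d * Real.exp (0 * Tsum α n d)
      ∂(biGaussModel sf2 sa2 α μ n) = 0 := hder.unique (hasDerivAt_const (0:ℝ) (0:ℝ))
  rw [← h0]
  congr 1
  funext d
  simp
  exact Or.inl rfl

lemma variance_decomp (hD : 0 < sf2 + sa2 - α ^ 2) (hn : 0 < n)
    {est : (Fin n → ℝ × ℝ) → ℝ} (hmeas : Measurable est)
    (hL2 : ∀ μ : ℝ, MemLp est 2 (biGaussModel sf2 sa2 α μ n))
    (hub : ∀ μ : ℝ, ∫ d, est d ∂(biGaussModel sf2 sa2 α μ n) = μ) (μ : ℝ) :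
    variance est (biGaussModel sf2 sa2 α μ n)
      = (∫ d, (est d - cvEstimator α n d) ^ 2 ∂(biGaussModel sf2 sa2 α μ n))
        + variance (cvEstimator α n) (biGaussModel sf2 sa2 α μ n) := by
  haveI := isProbability_model (n := n) hD μ
  set U : (Fin n → ℝ × ℝ) → ℝ := fun d => est d - cvEstimator α n d with hUdef
  have hUL2 : MemLp U 2 (biGaussModel sf2 sa2 α μ n) := by
    have := (hL2 μ).sub (memLp_cv hD μ)
    exact this
  have hcvL2 := memLp_cv (n := n) hD μ
  have hn' : (n : ℝ) ≠ 0 := Nat.cast_ne_zero.2 hn.ne'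
  -- cross term is zero
  have hcross : ∫ d, U d * cvEstimator α n d ∂(biGaussModel sf2 sa2 α μ n) = 0 := by
    have h := key_orth hD hn hmeas hL2 hub μ
    have : ∫ d, U d * cvEstimator α n d ∂(biGaussModel sf2 sa2 α μ n)
        = (n:ℝ)⁻¹ * ∫ d, U d * Tsum α n d ∂(biGaussModel sf2 sa2 α μ n) := by
      rw [← integral_const_mul]
      congr 1
      funext d
      rw [cv_eq]
      ring
    rw [this, h, mul_zero]
  -- integrability of pieces
  have hU2 : Integrable (fun d => U d ^ 2) (biGaussModel sf2 sa2 α μ n) := hUL2.integrable_sq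
  have hcv2 : Integrable (fun d => cvEstimator α n d ^ 2) (biGaussModel sf2 sa2 α μ n) :=
    hcvL2.integrable_sq
  have hUmeas : Measurable U := hmeas.sub measurable_cv
  have hUcv : Integrable (fun d => U d * cvEstimator α n d) (biGaussModel sf2 sa2 α μ n) := by
    refine Integrable.mono' ((hU2.add hcv2).div_const 2)
      ((hUmeas.mul measurable_cv).aestronglyMeasurable) (ae_of_all _ fun d => ?_)
    rw [Real.norm_eq_abs]
    simp only [Pi.add_apply]
    rw [abs_mul]
    have h2 := two_mul_le_add_sq (|U d|) (|cvEstimator α n d|)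
    rw [sq_abs, sq_abs] at h2
    ring_nf at h2 ⊢
    linarith
  have hsum : ∫ d, est d ^ 2 ∂(biGaussModel sf2 sa2 α μ n)
      = (∫ d, U d ^ 2 ∂(biGaussModel sf2 sa2 α μ n))
        + (2 * ∫ d, U d * cvEstimator α n d ∂(biGaussModel sf2 sa2 α μ n)
          + ∫ d, cvEstimator α n d ^ 2 ∂(biGaussModel sf2 sa2 α μ n)) := by
    have hfun : (fun d => est d ^ 2)
        = fun d => U d ^ 2 + (2 * (U d * cvEstimator α n d) + cvEstimator α n d ^ 2) := by
      funext d
      simp only [hUdef]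
      ring
    have hg1 : Integrable (fun d => 2 * (U d * cvEstimator α n d))
        (biGaussModel sf2 sa2 α μ n) := hUcv.const_mul 2
    have hg2 : Integrable (fun d => 2 * (U d * cvEstimator α n d) + cvEstimator α n d ^ 2)
        (biGaussModel sf2 sa2 α μ n) := hg1.add hcv2
    rw [hfun, integral_add hU2 hg2, integral_add hg1 hcv2, integral_const_mul]
  have hv1 : variance est (biGaussModel sf2 sa2 α μ n)
      = (∫ d, est d ^ 2 ∂(biGaussModel sf2 sa2 α μ n)) - μ ^ 2 := by
    rw [variance_eq_sub (hL2 μ)]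
    rw [hub μ]
    congr 1
  have hv2 : variance (cvEstimator α n) (biGaussModel sf2 sa2 α μ n)
      = (∫ d, cvEstimator α n d ^ 2 ∂(biGaussModel sf2 sa2 α μ n)) - μ ^ 2 := by
    rw [variance_eq_sub hcvL2]
    rw [integral_cv hD hn μ]
    congr 1
  rw [hv1, hsum, hcross, hv2]
  ring

end CVAux8


open CVAux CVAux2 CVAux3 CVAux4 CVAux5 CVAux6 CVAux7 CVAux8 in
/-- in the i.i.d. bivariate Gaussian model (`μ` unknown, all other
parameters known), `μ̂_cv` is the unique minimum-variance unbiased estimator of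
`μ`: its variance is `(σ_f²(1 − ρ²) + σ_a²)/n` with `ρ = α/σ_f`, any unbiased
finite-variance estimator has at least this variance, and any unbiased
estimator attaining it agrees with `μ̂_cv` almost everywhere. -/
theorem control_variates_is_MVUE
    (sf2 sa2 α : ℝ) (hsf : 0 < sf2) (hsa : 0 ≤ sa2)
    (hpd : α ^ 2 < sf2 + sa2)
    (n : ℕ) (hn : 0 < n)
    (ρ : ℝ) (hρ : ρ = α / Real.sqrt sf2) :
    -- μ̂_cv is unbiased with variance (σ_f²(1 − ρ²) + σ_a²)/n
    (∀ μ : ℝ, ∫ d, cvEstimator α n d ∂(biGaussModel sf2 sa2 α μ n) = μ)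
    ∧ (∀ μ : ℝ,
        variance (cvEstimator α n) (biGaussModel sf2 sa2 α μ n)
          = (sf2 * (1 - ρ ^ 2) + sa2) / n)
    -- any unbiased (finite-variance) estimator has at least this variance
    ∧ (∀ est : (Fin n → ℝ × ℝ) → ℝ, Measurable est →
        (∀ μ : ℝ, MemLp est 2 (biGaussModel sf2 sa2 α μ n)) →
        (∀ μ : ℝ, ∫ d, est d ∂(biGaussModel sf2 sa2 α μ n) = μ) →
        ∀ μ : ℝ,
          variance est (biGaussModel sf2 sa2 α μ n)
            ≥ (sf2 * (1 - ρ ^ 2) + sa2) / n)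
    -- uniqueness: any unbiased estimator attaining the bound equals μ̂_cv a.e.
    ∧ (∀ est : (Fin n → ℝ × ℝ) → ℝ, Measurable est →
        (∀ μ : ℝ, MemLp est 2 (biGaussModel sf2 sa2 α μ n)) →
        (∀ μ : ℝ, ∫ d, est d ∂(biGaussModel sf2 sa2 α μ n) = μ) →
        (∀ μ : ℝ,
          variance est (biGaussModel sf2 sa2 α μ n)
            = (sf2 * (1 - ρ ^ 2) + sa2) / n) →
        ∀ μ : ℝ, est =ᵐ[biGaussModel sf2 sa2 α μ n] cvEstimator α n) := by
  have hD : 0 < sf2 + sa2 - α ^ 2 := sub_pos.2 hpd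
  have htarget : (sf2 + sa2 - α ^ 2) / n = (sf2 * (1 - ρ ^ 2) + sa2) / n := by
    have hρ2 : ρ ^ 2 = α ^ 2 / sf2 := by
      rw [hρ, div_pow, Real.sq_sqrt hsf.le]
    rw [hρ2]
    congr 1
    field_simp
    ring
  refine ⟨fun μ => integral_cv hD hn μ, fun μ => ?_, fun est hm hL2 hub μ => ?_,
    fun est hm hL2 hub hvar μ => ?_⟩
  · rw [variance_cv hD hn μ, htarget]
  · rw [variance_decomp hD hn hm hL2 hub μ, variance_cv hD hn μ, htarget]
    have h0 : 0 ≤ ∫ d, (est d - cvEstimator α n d) ^ 2 ∂(biGaussModel sf2 sa2 α μ n) :=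
      integral_nonneg fun d => sq_nonneg _
    linarith
  · have hdec := variance_decomp hD hn hm hL2 hub μ
    rw [hvar μ, variance_cv hD hn μ, htarget] at hdec
    have h0 : ∫ d, (est d - cvEstimator α n d) ^ 2 ∂(biGaussModel sf2 sa2 α μ n) = 0 := by
      linarith
    have hint : Integrable (fun d => (est d - cvEstimator α n d) ^ 2)
        (biGaussModel sf2 sa2 α μ n) := by
      have := ((hL2 μ).sub (memLp_cv hD μ)).integrable_sq
      exact this.congr (ae_of_all _ fun d => by simp)
    have hae := (integral_eq_zero_iff_of_nonneg (fun d => sq_nonneg _) hint).1 h0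
    filter_upwards [hae] with d hd
    have : (est d - cvEstimator α n d) ^ 2 = 0 := hd
    have h2 := pow_eq_zero_iff (two_ne_zero) |>.1 this
    exact sub_eq_zero.1 h2
end

section
/- Consider the plug-in control variates estimator μ̃ = (1/n) Σᵢ (y⁽ⁱ⁾ − α̂ g(z⁽ⁱ⁾)), where α̂ = (1/n) Σᵢ (y⁽ⁱ⁾ − ȳ) g(z⁽ⁱ⁾) and ȳ = (1/n) Σᵢ y⁽ⁱ⁾. Then the bias |E[μ̃] − μ| is O(1/n); specifically, |E[μ̃] − μ| ≤ C/n for a constant C depending only on the (bounded) moments E_z[|f(z)| g(z)²] and sup_z |f(z)|, E_z[g(z)²]. -/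
open MeasureTheory ProbabilityTheory
open scoped ENNReal

/-- the plug-in control variates estimator
`μ̃ = (1/n) Σᵢ (y⁽ⁱ⁾ − α̂ g(z⁽ⁱ⁾))`, with
`α̂ = (1/n) Σᵢ (y⁽ⁱ⁾ − ȳ) g(z⁽ⁱ⁾)` estimated from the same samples, has bias
`O(1/n)`: there is a constant `C` (depending only on `f`, `g`, `Z`) such that
`|E[μ̃] − μ| ≤ C/n` for every sample size `n`. -/
theorem plug_in_estimator_bias_O_inv_n
    {Ω : Type*} [MeasurableSpace Ω] (P : Measure Ω) [IsProbabilityMeasure P]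
    {Z : Type*} [Fintype Z] [Nonempty Z] [MeasurableSpace Z] [MeasurableSingletonClass Z]
    (z : (n : ℕ) → Fin n → Ω → Z) (y : (n : ℕ) → Fin n → Ω → ℝ)
    (f g : Z → ℝ)
    (hzmeas : ∀ n i, Measurable (z n i))
    (hymeas : ∀ n i, Measurable (y n i))
    (hyL2 : ∀ n i, MemLp (y n i) 2 P)
    (hunif : ∀ n i, Measure.map (z n i) P = (PMF.uniformOfFintype Z).toMeasure)
    (hindep : ∀ n, iIndepFun
      (fun (i : Fin n) ω => (z n i ω, y n i ω)) P)
    (hcond : ∀ n i,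
      P[y n i | MeasurableSpace.comap (z n i) inferInstance]
        =ᵐ[P] fun ω => f (z n i ω))
    -- g has zero mean under the uniform distribution
    (hgmean : (∑ s, g s) / Fintype.card Z = 0)
    (μ : ℝ) (hμ : μ = (∑ s, f s) / Fintype.card Z) :
    ∃ C : ℝ, ∀ n : ℕ, 0 < n →
      |(∫ ω, (n : ℝ)⁻¹ * ∑ i,
          (y n i ω
            - ((n : ℝ)⁻¹ * ∑ j, (y n j ω - (n : ℝ)⁻¹ * ∑ k, y n k ω) * g (z n j ω))
              * g (z n i ω)) ∂P) - μ|
        ≤ C / n := by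
  classical
  have hg : Measurable g := measurable_of_countable g
  set b : ℝ := (∑ s, f s * (g s * g s)) / (Fintype.card Z : ℝ) with hbdef
  set cE : ℝ := (∑ s, g s * g s) / (Fintype.card Z : ℝ) with hcEdef
  refine ⟨|cE * μ - b|, ?_⟩
  intro n hn
  -- basic facts
  have hYint : ∀ i : Fin n, Integrable (y n i) P := fun i => (hyL2 n i).integrable one_le_two
  have hGmeas : ∀ i : Fin n, Measurable (fun ω => g (z n i ω)) := fun i => hg.comp (hzmeas n i)
  set M : ℝ := ∑ s, |g s| with hMdef
  have hMg : ∀ (i : Fin n) (ω : Ω), |g (z n i ω)| ≤ M := by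
    intro i ω
    exact Finset.single_le_sum (fun s _ => abs_nonneg (g s)) (Finset.mem_univ (z n i ω))
  have hGint : ∀ i : Fin n, Integrable (fun ω => g (z n i ω)) P := by
    intro i
    refine (integrable_const M).mono' (hGmeas i).aestronglyMeasurable ?_
    exact Filter.Eventually.of_forall fun ω => by simpa [Real.norm_eq_abs] using hMg i ω
  have hGGint : ∀ i : Fin n, Integrable (fun ω => g (z n i ω) * g (z n i ω)) P := by
    intro i
    refine (integrable_const (M * M)).mono' ((hGmeas i).mul (hGmeas i)).aestronglyMeasurable ?_
    refine Filter.Eventually.of_forall fun ω => ?_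
    have h0 : (0:ℝ) ≤ M := le_trans (abs_nonneg _) (hMg i ω)
    calc ‖g (z n i ω) * g (z n i ω)‖ = |g (z n i ω)| * |g (z n i ω)| := by
          rw [Real.norm_eq_abs, abs_mul]
      _ ≤ M * M := mul_le_mul (hMg i ω) (hMg i ω) (abs_nonneg _) h0
  have hIntYG : ∀ k j : Fin n, Integrable (fun ω => y n k ω * g (z n j ω)) P := by
    intro k j
    have h1 : Integrable (fun ω => g (z n j ω) * y n k ω) P :=
      (hYint k).bdd_mul (hGmeas j).aestronglyMeasurable
        (Filter.Eventually.of_forall fun ω => by simpa [Real.norm_eq_abs] using hMg j ω)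
    exact h1.congr (Filter.Eventually.of_forall fun ω => mul_comm _ _)
  have hIntYgg : ∀ i j k : Fin n,
      Integrable (fun ω => y n k ω * g (z n j ω) * g (z n i ω)) P := by
    intro i j k
    have h1 : Integrable (fun ω => g (z n i ω) * (y n k ω * g (z n j ω))) P :=
      (hIntYG k j).bdd_mul (hGmeas i).aestronglyMeasurable
        (Filter.Eventually.of_forall fun ω => by simpa [Real.norm_eq_abs] using hMg i ω)
    exact h1.congr (Filter.Eventually.of_forall fun ω => by ring)
  -- expectations of functions of z
  have hEh : ∀ (i : Fin n) (h : Z → ℝ),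
      ∫ ω, h (z n i ω) ∂P = (∑ s, h s) / (Fintype.card Z : ℝ) := by
    intro i h
    rw [← integral_map (hzmeas n i).aemeasurable (measurable_of_countable h).aestronglyMeasurable,
      hunif n i, integral_fintype (Integrable.of_finite)]
    have hval : ∀ s : Z, ((PMF.uniformOfFintype Z).toMeasure).real {s} • h s
        = h s * (Fintype.card Z : ℝ)⁻¹ := by
      intro s
      rw [measureReal_def, PMF.toMeasure_apply_singleton _ _ (measurableSet_singleton s),
        PMF.uniformOfFintype_apply, smul_eq_mul]
      simp [ENNReal.toReal_inv, mul_comm]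
    rw [Finset.sum_congr rfl fun s _ => hval s, ← Finset.sum_mul, div_eq_mul_inv]
  have hEG : ∀ i : Fin n, ∫ ω, g (z n i ω) ∂P = 0 := by
    intro i
    rw [hEh i g]
    exact hgmean
  -- measure of fibers
  have hPz : ∀ (i : Fin n) (s : Z), P (z n i ⁻¹' {s}) = ((Fintype.card Z : ℝ≥0∞))⁻¹ := by
    intro i s
    have h1 : P (z n i ⁻¹' {s}) = (Measure.map (z n i) P) {s} :=
      (Measure.map_apply (hzmeas n i) (measurableSet_singleton s)).symm
    rw [h1, hunif n i, PMF.toMeasure_apply_singleton _ _ (measurableSet_singleton s),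
      PMF.uniformOfFintype_apply]
  -- conditional expectation: set integrals of y over fibers of z
  have hsetY : ∀ (i : Fin n) (s : Z),
      ∫ ω in z n i ⁻¹' {s}, y n i ω ∂P = f s * ((Fintype.card Z : ℝ))⁻¹ := by
    intro i s
    have hm : MeasurableSpace.comap (z n i) inferInstance ≤ _ := (hzmeas n i).comap_le
    have hAm : MeasurableSet[MeasurableSpace.comap (z n i) inferInstance] (z n i ⁻¹' {s}) :=
      ⟨{s}, measurableSet_singleton s, rfl⟩
    have hA : MeasurableSet (z n i ⁻¹' {s}) := hzmeas n i (measurableSet_singleton s)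
    have h1 : ∫ ω in z n i ⁻¹' {s},
        (P[y n i|MeasurableSpace.comap (z n i) inferInstance]) ω ∂P
        = ∫ ω in z n i ⁻¹' {s}, y n i ω ∂P :=
      setIntegral_condExp hm (hYint i) hAm
    have h2 : ∫ ω in z n i ⁻¹' {s},
        (P[y n i|MeasurableSpace.comap (z n i) inferInstance]) ω ∂P
        = ∫ ω in z n i ⁻¹' {s}, f (z n i ω) ∂P :=
      integral_congr_ae (ae_restrict_of_ae (hcond n i))
    have h3 : ∫ ω in z n i ⁻¹' {s}, f (z n i ω) ∂P = ∫ _ω in z n i ⁻¹' {s}, f s ∂P := by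
      refine setIntegral_congr_fun hA fun ω hω => ?_
      have : z n i ω = s := hω
      rw [this]
    rw [← h1, h2, h3, setIntegral_const, measureReal_def, hPz i s, smul_eq_mul, mul_comm]
    congr 1
    simp [ENNReal.toReal_inv]
  -- expectations E[y_i h(z_i)]
  have hEYh : ∀ (i : Fin n) (h : Z → ℝ),
      ∫ ω, y n i ω * h (z n i ω) ∂P = (∑ s, f s * h s) / (Fintype.card Z : ℝ) := by
    intro i h
    have hpt : (fun ω => y n i ω * h (z n i ω))
        = fun ω => ∑ s, Set.indicator (z n i ⁻¹' {s}) (fun ω' => h s * y n i ω') ω := by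
      funext ω
      simp only [Set.indicator_apply, Set.mem_preimage, Set.mem_singleton_iff]
      rw [Finset.sum_ite_eq]
      simp [mul_comm]
    rw [hpt, integral_finset_sum _ (fun s _ =>
      ((hYint i).const_mul (h s)).indicator (hzmeas n i (measurableSet_singleton s)))]
    rw [Finset.sum_congr rfl fun s _ => by
      rw [integral_indicator (hzmeas n i (measurableSet_singleton s)), integral_const_mul,
        hsetY i s]]
    rw [div_eq_mul_inv, Finset.sum_mul]
    exact Finset.sum_congr rfl fun s _ => by ring
  have hEY : ∀ i : Fin n, ∫ ω, y n i ω ∂P = μ := by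
    intro i
    have h1 := hEYh i (fun _ => 1)
    simp only [mul_one] at h1
    rw [h1, hμ]
  have hb : ∀ i : Fin n, ∫ ω, y n i ω * g (z n i ω) * g (z n i ω) ∂P = b := by
    intro i
    have h2 : (fun ω => y n i ω * g (z n i ω) * g (z n i ω))
        = fun ω => y n i ω * ((fun s => g s * g s) (z n i ω)) := by
      funext ω; ring
    rw [h2, hEYh i (fun s => g s * g s)]
  -- independence consequences
  have hWmeas : ∀ i : Fin n, Measurable (fun ω => (z n i ω, y n i ω)) :=
    fun i => (hzmeas n i).prodMk (hymeas n i)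
  have hmul0two : ∀ i j k : Fin n, j ≠ i → k ≠ i →
      ∫ ω, y n k ω * g (z n j ω) * g (z n i ω) ∂P = 0 := by
    intro i j k hj hk
    have hpair := (hindep n).indepFun_prodMk hWmeas k j i hk hj
    have hIF : IndepFun (fun ω => y n k ω * g (z n j ω)) (fun ω => g (z n i ω)) P :=
      hpair.comp
        (show Measurable (fun q : (Z × ℝ) × (Z × ℝ) => q.1.2 * g q.2.1) from
          (measurable_fst.snd.mul (hg.comp measurable_snd.fst)))
        (hg.comp measurable_fst)
    have h1 : (∫ ω, y n k ω * g (z n j ω) * g (z n i ω) ∂P)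
        = (∫ ω, y n k ω * g (z n j ω) ∂P) * ∫ ω, g (z n i ω) ∂P :=
      hIF.integral_mul_eq_mul_integral (hIntYG k j).aestronglyMeasurable (hGint i).aestronglyMeasurable
    rw [h1, hEG i, mul_zero]
  have hI3mix : ∀ i k : Fin n, k ≠ i →
      ∫ ω, y n k ω * g (z n i ω) * g (z n i ω) ∂P = cE * μ := by
    intro i k hki
    have h0 : IndepFun (fun ω => (z n i ω, y n i ω)) (fun ω => (z n k ω, y n k ω)) P :=
      (hindep n).indepFun (Ne.symm hki)
    have hIF : IndepFun (fun ω => g (z n i ω) * g (z n i ω)) (y n k) P :=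
      h0.comp
        (show Measurable (fun p : Z × ℝ => g p.1 * g p.1) from
          (hg.comp measurable_fst).mul (hg.comp measurable_fst))
        measurable_snd
    have h1 : (∫ ω, g (z n i ω) * g (z n i ω) * y n k ω ∂P)
        = (∫ ω, g (z n i ω) * g (z n i ω) ∂P) * ∫ ω, y n k ω ∂P :=
      hIF.integral_mul_eq_mul_integral (hGGint i).aestronglyMeasurable (hYint k).aestronglyMeasurable
    have h2 : ∫ ω, y n k ω * g (z n i ω) * g (z n i ω) ∂P
        = ∫ ω, g (z n i ω) * g (z n i ω) * y n k ω ∂P :=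
      integral_congr_ae (Filter.Eventually.of_forall fun ω => by ring)
    rw [h2, h1, hEY k, hEh i (fun s => g s * g s)]
  -- the values of all triple-product expectations
  have hI3 : ∀ i j k : Fin n, ∫ ω, y n k ω * g (z n j ω) * g (z n i ω) ∂P
      = if j = i then (if k = i then b else cE * μ) else 0 := by
    intro i j k
    by_cases hj : j = i
    · subst hj
      rw [if_pos rfl]
      by_cases hk : k = j
      · subst hk
        rw [if_pos rfl]
        exact hb k
      · rw [if_neg hk]
        exact hI3mix j k hk
    · rw [if_neg hj]
      by_cases hk : k = i
      · subst hk
        have h2 : ∫ ω, y n k ω * g (z n j ω) * g (z n k ω) ∂P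
            = ∫ ω, y n k ω * g (z n k ω) * g (z n j ω) ∂P :=
          integral_congr_ae (Filter.Eventually.of_forall fun ω => by ring)
        rw [h2]
        exact hmul0two j k k (fun h => hj h.symm) (fun h => hj h.symm)
      · exact hmul0two i j k hj hk
  have hI3sum : ∀ i j : Fin n,
      (∑ k, ∫ ω, y n k ω * g (z n j ω) * g (z n i ω) ∂P)
        = if j = i then b + ((n:ℝ) - 1) * (cE * μ) else 0 := by
    intro i j
    rw [Finset.sum_congr rfl fun k _ => hI3 i j k]
    by_cases hj : j = i
    · rw [if_pos hj]
      simp only [if_pos hj]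
      have hsplit : ∀ k : Fin n,
          (if k = i then b else cE * μ) = cE * μ + (if k = i then b - cE * μ else 0) :=
        fun k => by split_ifs <;> ring
      rw [Finset.sum_congr rfl fun k _ => hsplit k, Finset.sum_add_distrib,
        Finset.sum_const, Finset.sum_ite_eq' Finset.univ i fun _ => b - cE * μ]
      simp only [Finset.card_univ, Fintype.card_fin, Finset.mem_univ, if_true, nsmul_eq_mul]
      ring
    · rw [if_neg hj]
      simp [hj]
  -- pointwise expansion of the inner product terms
  have hptJ : ∀ i j : Fin n,
      (fun ω => (y n j ω - (n:ℝ)⁻¹ * ∑ k, y n k ω) * g (z n j ω) * g (z n i ω))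
        = fun ω => y n j ω * g (z n j ω) * g (z n i ω)
            - ∑ k, (n:ℝ)⁻¹ * (y n k ω * g (z n j ω) * g (z n i ω)) := by
    intro i j
    funext ω
    rw [sub_mul, sub_mul, Finset.mul_sum, Finset.sum_mul, Finset.sum_mul]
    congr 1
    exact Finset.sum_congr rfl fun k _ => by ring
  have hIntJ : ∀ i j : Fin n,
      Integrable (fun ω => (y n j ω - (n:ℝ)⁻¹ * ∑ k, y n k ω) * g (z n j ω) * g (z n i ω)) P := by
    intro i j
    rw [hptJ i j]
    exact (hIntYgg i j j).sub
      (integrable_finset_sum _ fun k _ => (hIntYgg i j k).const_mul _)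
  have hJ : ∀ i j : Fin n,
      ∫ ω, (y n j ω - (n:ℝ)⁻¹ * ∑ k, y n k ω) * g (z n j ω) * g (z n i ω) ∂P
        = (if j = i then b else 0)
          - (n:ℝ)⁻¹ * (if j = i then b + ((n:ℝ) - 1) * (cE * μ) else 0) := by
    intro i j
    rw [hptJ i j,
      integral_sub (hIntYgg i j j)
        (integrable_finset_sum _ fun k _ => (hIntYgg i j k).const_mul _),
      integral_finset_sum _ (fun k _ => (hIntYgg i j k).const_mul _)]
    rw [Finset.sum_congr rfl fun k _ => integral_const_mul _ _, ← Finset.mul_sum, hI3sum i j,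
      hI3 i j j]
    by_cases hj : j = i <;> simp [hj]
  -- pointwise expansion of α̂ * g(z_i)
  have hptA : ∀ i : Fin n,
      (fun ω => ((n:ℝ)⁻¹ * ∑ j, (y n j ω - (n:ℝ)⁻¹ * ∑ k, y n k ω) * g (z n j ω)) * g (z n i ω))
        = fun ω => ∑ j, (n:ℝ)⁻¹ *
            ((y n j ω - (n:ℝ)⁻¹ * ∑ k, y n k ω) * g (z n j ω) * g (z n i ω)) := by
    intro i
    funext ω
    rw [mul_assoc, Finset.sum_mul, Finset.mul_sum]
  have hIntA : ∀ i : Fin n,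
      Integrable (fun ω =>
        ((n:ℝ)⁻¹ * ∑ j, (y n j ω - (n:ℝ)⁻¹ * ∑ k, y n k ω) * g (z n j ω)) * g (z n i ω)) P := by
    intro i
    rw [hptA i]
    exact integrable_finset_sum _ fun j _ => (hIntJ i j).const_mul _
  have hA : ∀ i : Fin n,
      ∫ ω, ((n:ℝ)⁻¹ * ∑ j, (y n j ω - (n:ℝ)⁻¹ * ∑ k, y n k ω) * g (z n j ω)) * g (z n i ω) ∂P
        = (n:ℝ)⁻¹ * (b - (n:ℝ)⁻¹ * (b + ((n:ℝ) - 1) * (cE * μ))) := by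
    intro i
    rw [hptA i, integral_finset_sum _ (fun j _ => (hIntJ i j).const_mul _)]
    rw [Finset.sum_congr rfl fun j _ => by rw [integral_const_mul, hJ i j]]
    rw [← Finset.mul_sum]
    congr 1
    rw [Finset.sum_sub_distrib, Finset.sum_ite_eq' Finset.univ i fun _ => b, ← Finset.mul_sum,
      Finset.sum_ite_eq' Finset.univ i fun _ => b + ((n:ℝ) - 1) * (cE * μ)]
    simp
  -- main computation of the expectation
  have hnne : (n:ℝ) ≠ 0 := Nat.cast_ne_zero.mpr hn.ne'
  have hmain : (∫ ω, (n : ℝ)⁻¹ * ∑ i,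
          (y n i ω
            - ((n : ℝ)⁻¹ * ∑ j, (y n j ω - (n : ℝ)⁻¹ * ∑ k, y n k ω) * g (z n j ω))
              * g (z n i ω)) ∂P)
      = μ - (n:ℝ)⁻¹ * (b - (n:ℝ)⁻¹ * (b + ((n:ℝ) - 1) * (cE * μ))) := by
    rw [integral_const_mul]
    have hsum : (∫ ω, ∑ i,
          (y n i ω
            - ((n : ℝ)⁻¹ * ∑ j, (y n j ω - (n : ℝ)⁻¹ * ∑ k, y n k ω) * g (z n j ω))
              * g (z n i ω)) ∂P)
        = ∑ i, ∫ ω,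
          (y n i ω
            - ((n : ℝ)⁻¹ * ∑ j, (y n j ω - (n : ℝ)⁻¹ * ∑ k, y n k ω) * g (z n j ω))
              * g (z n i ω)) ∂P :=
      integral_finset_sum _ (fun i _ => (hYint i).sub (hIntA i))
    rw [hsum]
    rw [Finset.sum_congr rfl fun i _ => by
      rw [integral_sub (hYint i) (hIntA i), hEY i, hA i]]
    rw [Finset.sum_const, Finset.card_univ, Fintype.card_fin, nsmul_eq_mul, ← mul_assoc,
      inv_mul_cancel₀ hnne, one_mul]
  rw [hmain]
  have hN1 : (1:ℝ) ≤ (n:ℝ) := by exact_mod_cast hn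
  have hNpos : (0:ℝ) < (n:ℝ) := lt_of_lt_of_le one_pos hN1
  have heq : μ - (n:ℝ)⁻¹ * (b - (n:ℝ)⁻¹ * (b + ((n:ℝ) - 1) * (cE * μ))) - μ
      = (((n:ℝ) - 1) / (n:ℝ)^2) * (cE * μ - b) := by
    field_simp
    ring
  rw [heq, abs_mul, abs_of_nonneg (div_nonneg (by linarith) (by positivity))]
  have hle : ((n:ℝ) - 1) / (n:ℝ)^2 ≤ 1 / (n:ℝ) := by
    rw [div_le_div_iff₀ (by positivity) hNpos]
    nlinarith
  calc ((n:ℝ) - 1) / (n:ℝ)^2 * |cE * μ - b|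
      ≤ (1 / (n:ℝ)) * |cE * μ - b| := mul_le_mul_of_nonneg_right hle (abs_nonneg _)
    _ = |cE * μ - b| / (n:ℝ) := by ring
end

section
/- Under the plug-in estimator setup, with distinct samples independent and E_z[g(z)] = 0, the exact bias satisfies E[μ̃] − μ = −((n−1)/n²) (E_z[f(z)g(z)²] − μ E_z[g(z)²]). -/
open MeasureTheory ProbabilityTheory

lemma unif_int {Ω Z : Type*} [MeasurableSpace Ω] [Fintype Z] [Nonempty Z]
    [MeasurableSpace Z] [MeasurableSingletonClass Z]
    (P : Measure Ω) (z : Ω → Z) (hz : Measurable z)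
    (hu : Measure.map z P = (PMF.uniformOfFintype Z).toMeasure) (h : Z → ℝ) :
    ∫ ω, h (z ω) ∂P = (∑ s, h s) / Fintype.card Z := by
  have hh : Measurable h := measurable_of_countable h
  rw [← integral_map hz.aemeasurable hh.aestronglyMeasurable, hu, PMF.integral_eq_sum]
  simp only [PMF.uniformOfFintype_apply, ENNReal.toReal_inv, ENNReal.toReal_natCast, smul_eq_mul]
  rw [Finset.sum_div]
  exact Finset.sum_congr rfl fun s _ => by rw [div_eq_inv_mul]

lemma cond_int {Ω Z : Type*} [MeasurableSpace Ω] [Fintype Z] [Nonempty Z]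
    [MeasurableSpace Z] [MeasurableSingletonClass Z]
    (P : Measure Ω) [IsProbabilityMeasure P] (z : Ω → Z) (y : Ω → ℝ) (f : Z → ℝ)
    (hz : Measurable z) (hy : Integrable y P)
    (hc : P[y | MeasurableSpace.comap z inferInstance] =ᵐ[P] fun ω => f (z ω))
    (h : Z → ℝ) :
    ∫ ω, y ω * h (z ω) ∂P = ∫ ω, f (z ω) * h (z ω) ∂P := by
  set m := MeasurableSpace.comap z inferInstance with hm_def
  have hm : m ≤ _ := hz.comap_le
  have hzm : Measurable[m] z := Measurable.of_comap_le le_rfl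
  have hsm : StronglyMeasurable[m] (fun ω => h (z ω)) :=
    ((measurable_of_countable h).comp hzm).stronglyMeasurable
  have hbd : ∃ C, ∀ ω, ‖h (z ω)‖ ≤ C :=
    ⟨∑ s, ‖h s‖, fun ω => Finset.single_le_sum (fun s _ => norm_nonneg (h s)) (Finset.mem_univ _)⟩
  have hint : Integrable ((fun ω => h (z ω)) * y) P := by
    exact hy.bdd_mul (((measurable_of_countable h).comp hz).aestronglyMeasurable) (ae_of_all _ hbd.choose_spec)
  have e1 : ∫ ω, y ω * h (z ω) ∂P = ∫ ω, ((fun ω => h (z ω)) * y) ω ∂P := by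
    refine integral_congr_ae (Filter.EventuallyEq.of_eq (funext fun ω => ?_))
    simp [mul_comm]
  rw [e1, ← integral_condExp hm]
  refine integral_congr_ae ?_
  filter_upwards [condExp_mul_of_stronglyMeasurable_left hsm hint hy, hc] with ω h1 h2
  simp only [Pi.mul_apply] at h1 h2 ⊢
  rw [h1, h2, mul_comm]

/-- exact bias of the plug-in control variates estimator
`μ̃ = (1/n) Σᵢ (y⁽ⁱ⁾ − α̂ g(z⁽ⁱ⁾))` with
`α̂ = (1/n) Σᵢ (y⁽ⁱ⁾ − ȳ) g(z⁽ⁱ⁾)`: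
`E[μ̃] − μ = −((n−1)/n²) (E_z[f g²] − μ E_z[g²])`. -/
theorem plug_in_estimator_exact_bias
    {Ω : Type*} [MeasurableSpace Ω] (P : Measure Ω) [IsProbabilityMeasure P]
    {Z : Type*} [Fintype Z] [Nonempty Z] [MeasurableSpace Z] [MeasurableSingletonClass Z]
    (n : ℕ) (hn : 0 < n)
    (z : Fin n → Ω → Z) (y : Fin n → Ω → ℝ)
    (f g : Z → ℝ)
    (hzmeas : ∀ i, Measurable (z i))
    (hymeas : ∀ i, Measurable (y i))
    (hyL2 : ∀ i, MemLp (y i) 2 P)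
    (hunif : ∀ i, Measure.map (z i) P = (PMF.uniformOfFintype Z).toMeasure)
    (hindep : iIndepFun (fun i ω => (z i ω, y i ω)) P)
    (hcond : ∀ i,
      P[y i | MeasurableSpace.comap (z i) inferInstance] =ᵐ[P] fun ω => f (z i ω))
    -- g has zero mean under the uniform distribution
    (hgmean : (∑ s, g s) / Fintype.card Z = 0)
    (μ : ℝ) (hμ : μ = (∑ s, f s) / Fintype.card Z) :
    (∫ ω, (n : ℝ)⁻¹ * ∑ i,
        (y i ω
          - ((n : ℝ)⁻¹ * ∑ j, (y j ω - (n : ℝ)⁻¹ * ∑ k, y k ω) * g (z j ω))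
            * g (z i ω)) ∂P) - μ
      = -(((n : ℝ) - 1) / (n : ℝ) ^ 2) *
          ((∑ s, f s * g s ^ 2) / Fintype.card Z
            - μ * ((∑ s, g s ^ 2) / Fintype.card Z)) := by
  classical
  have hgm : Measurable g := measurable_of_countable g
  have hGmeas : ∀ i, Measurable (fun ω => g (z i ω)) := fun i => hgm.comp (hzmeas i)
  have hyint : ∀ i, Integrable (y i) P := fun i => (hyL2 i).integrable one_le_two
  have hW : ∀ i, Measurable (fun ω => (z i ω, y i ω)) := fun i => (hzmeas i).prodMk (hymeas i)
  set A : ℝ := (∑ s, f s * g s ^ 2) / Fintype.card Z with hA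
  set B : ℝ := (∑ s, g s ^ 2) / Fintype.card Z with hB
  -- integrability of monomials
  have hgbdd : ∀ j i : Fin n, ∃ C, ∀ ω, ‖g (z j ω) * g (z i ω)‖ ≤ C := by
    intro j i
    refine ⟨(∑ t, |g t|) * (∑ t, |g t|), fun ω => ?_⟩
    have h1 : ∀ s : Z, |g s| ≤ ∑ t, |g t| := fun s =>
      Finset.single_le_sum (fun t _ => abs_nonneg (g t)) (Finset.mem_univ s)
    rw [Real.norm_eq_abs, abs_mul]
    exact mul_le_mul (h1 _) (h1 _) (abs_nonneg _)
      (Finset.sum_nonneg fun t _ => abs_nonneg (g t))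
  have hint3 : ∀ j i k : Fin n, Integrable (fun ω => g (z j ω) * g (z i ω) * y k ω) P :=
    fun j i k => (hyint k).bdd_mul ((hGmeas j).mul (hGmeas i)).aestronglyMeasurable (ae_of_all _ (hgbdd j i).choose_spec)
  -- basic expectations
  have EG : ∀ (i : Fin n) (h : Z → ℝ),
      ∫ ω, h (z i ω) ∂P = (∑ s, h s) / Fintype.card Z :=
    fun i h => unif_int P (z i) (hzmeas i) (hunif i) h
  have EG0 : ∀ i, ∫ ω, g (z i ω) ∂P = 0 := fun i => by rw [EG i g]; exact hgmean
  have Ey : ∀ i, ∫ ω, y i ω ∂P = μ := by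
    intro i
    have h1 := cond_int P (z i) (y i) f (hzmeas i) (hyint i) (hcond i) (fun _ => 1)
    simp only [mul_one] at h1
    rw [h1, EG i f, hμ]
  have EyG : ∀ (i : Fin n) (h : Z → ℝ),
      ∫ ω, y i ω * h (z i ω) ∂P = (∑ s, f s * h s) / Fintype.card Z := by
    intro i h
    rw [cond_int P (z i) (y i) f (hzmeas i) (hyint i) (hcond i) h]
    exact EG i (fun s => f s * h s)
  -- independence: two distinct indices
  have hind2 : ∀ (i j : Fin n), i ≠ j → ∀ (φ ψ : Z × ℝ → ℝ), Measurable φ → Measurable ψ →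
      ∫ ω, φ (z i ω, y i ω) * ψ (z j ω, y j ω) ∂P
        = (∫ ω, φ (z i ω, y i ω) ∂P) * ∫ ω, ψ (z j ω, y j ω) ∂P := by
    intro i j hij φ ψ hφ hψ
    exact ((hindep.indepFun hij).comp hφ hψ).integral_fun_mul_eq_mul_integral
      (hφ.comp (hW i)).aestronglyMeasurable (hψ.comp (hW j)).aestronglyMeasurable
  -- independence: pair vs third
  have hind3 : ∀ (j k i : Fin n), j ≠ i → k ≠ i →
      ∀ (ψ : (Z × ℝ) × (Z × ℝ) → ℝ) (φ : Z × ℝ → ℝ), Measurable ψ → Measurable φ →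
      ∫ ω, ψ ((z j ω, y j ω), (z k ω, y k ω)) * φ (z i ω, y i ω) ∂P
        = (∫ ω, ψ ((z j ω, y j ω), (z k ω, y k ω)) ∂P) * ∫ ω, φ (z i ω, y i ω) ∂P := by
    intro j k i hji hki ψ φ hψ hφ
    exact ((hindep.indepFun_prodMk hW j k i hji hki).comp hψ hφ).integral_fun_mul_eq_mul_integral
      (hψ.comp ((hW j).prodMk (hW k))).aestronglyMeasurable
      (hφ.comp (hW i)).aestronglyMeasurable
  -- the per-term integrals
  set S : Fin n → Fin n → Fin n → ℝ :=
    fun i j k => ∫ ω, g (z j ω) * g (z i ω) * y k ω ∂P with hS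
  have hSdiag : ∀ i, S i i i = A := by
    intro i
    have e : S i i i = ∫ ω, y i ω * g (z i ω) ^ 2 ∂P := by
      refine integral_congr_ae (Filter.EventuallyEq.of_eq (funext fun ω => ?_))
      ring
    rw [e]
    exact EyG i (fun s => g s ^ 2)
  have hSiik : ∀ i k, k ≠ i → S i i k = B * μ := by
    intro i k hki
    have e : S i i k = ∫ ω, (g (z i ω) ^ 2) * y k ω ∂P := by
      refine integral_congr_ae (Filter.EventuallyEq.of_eq (funext fun ω => ?_))
      ring
    rw [e, hind2 i k (fun h => hki h.symm) (fun p => g p.1 ^ 2) (fun p => p.2)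
      ((hgm.comp measurable_fst).pow_const 2) measurable_snd,
      Ey k]
    have := EG i (fun s => g s ^ 2)
    rw [this]
  have hSiji : ∀ i j, j ≠ i → S i j i = 0 := by
    intro i j hji
    have e : S i j i = ∫ ω, g (z j ω) * (g (z i ω) * y i ω) ∂P := by
      refine integral_congr_ae (Filter.EventuallyEq.of_eq (funext fun ω => ?_))
      ring
    rw [e, hind2 j i hji (fun p => g p.1) (fun p => g p.1 * p.2)
      (hgm.comp measurable_fst) ((hgm.comp measurable_fst).mul measurable_snd),
      EG0 j, zero_mul]
  have hSijj : ∀ i j, j ≠ i → S i j j = 0 := by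
    intro i j hji
    have e : S i j j = ∫ ω, (g (z j ω) * y j ω) * g (z i ω) ∂P := by
      refine integral_congr_ae (Filter.EventuallyEq.of_eq (funext fun ω => ?_))
      ring
    rw [e, hind2 j i hji (fun p => g p.1 * p.2) (fun p => g p.1)
      ((hgm.comp measurable_fst).mul measurable_snd) (hgm.comp measurable_fst),
      EG0 i, mul_zero]
  have hSdist : ∀ i j k, j ≠ i → k ≠ i → k ≠ j → S i j k = 0 := by
    intro i j k hji hki _
    have e : S i j k = ∫ ω, (g (z j ω) * y k ω) * g (z i ω) ∂P := by
      refine integral_congr_ae (Filter.EventuallyEq.of_eq (funext fun ω => ?_))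
      ring
    rw [e, hind3 j k i hji hki (fun q => g q.1.1 * q.2.2) (fun p => g p.1)
      ((hgm.comp (measurable_fst.comp measurable_fst)).mul
        (measurable_snd.comp measurable_snd)) (hgm.comp measurable_fst),
      EG0 i, mul_zero]
  -- sums
  have hcard : (Finset.univ : Finset (Fin n)).card = n := by simp
  have hSsum : ∀ i : Fin n, ∑ j, ∑ k, S i j k = A + ((n : ℝ) - 1) * (B * μ) := by
    intro i
    rw [Finset.sum_eq_single_of_mem i (Finset.mem_univ i) (fun j _ hj =>
      Finset.sum_eq_zero fun k _ => by
        rcases eq_or_ne k i with hki | hki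
        · rw [hki]; exact hSiji i j hj
        rcases eq_or_ne k j with hkj | hkj
        · rw [hkj]; exact hSijj i j hj
        · exact hSdist i j k hj hki hkj)]
    rw [← Finset.add_sum_erase _ _ (Finset.mem_univ i), hSdiag i]
    congr 1
    rw [Finset.sum_congr rfl (fun k hk => hSiik i k (Finset.ne_of_mem_erase hk)),
      Finset.sum_const, Finset.card_erase_of_mem (Finset.mem_univ i), hcard,
      nsmul_eq_mul, Nat.cast_sub hn, Nat.cast_one]
  have hDsum : ∀ i : Fin n, ∑ j, S i j j = A := by
    intro i
    rw [Finset.sum_eq_single_of_mem i (Finset.mem_univ i)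
      (fun j _ hj => hSijj i j hj), hSdiag i]
  have hrow2 : ∀ i : Fin n,
      ∫ ω, ∑ j, g (z j ω) * g (z i ω) * y j ω ∂P = A := by
    intro i
    rw [integral_finset_sum _ (fun j _ => hint3 j i j)]
    exact hDsum i
  have hrow3 : ∀ i : Fin n,
      ∫ ω, ∑ j, ∑ k, g (z j ω) * g (z i ω) * y k ω ∂P
        = A + ((n : ℝ) - 1) * (B * μ) := by
    intro i
    rw [integral_finset_sum _ (fun j _ => integrable_finset_sum _ fun k _ => hint3 j i k),
      Finset.sum_congr rfl (fun j _ => integral_finset_sum _ (fun k _ => hint3 j i k))]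
    exact hSsum i
  -- integrability of the three grouped terms
  have hI1 : Integrable (fun ω => (n : ℝ)⁻¹ * ∑ i, y i ω) P :=
    (integrable_finset_sum _ fun i _ => hyint i).const_mul _
  have hI2 : Integrable (fun ω =>
      (n : ℝ)⁻¹ ^ 2 * ∑ i, ∑ j, g (z j ω) * g (z i ω) * y j ω) P :=
    (integrable_finset_sum _ fun i _ =>
      integrable_finset_sum _ fun j _ => hint3 j i j).const_mul _
  have hI3 : Integrable (fun ω =>
      (n : ℝ)⁻¹ ^ 3 * ∑ i, ∑ j, ∑ k, g (z j ω) * g (z i ω) * y k ω) P :=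
    (integrable_finset_sum _ fun i _ => integrable_finset_sum _ fun j _ =>
      integrable_finset_sum _ fun k _ => hint3 j i k).const_mul _
  have hI12 : Integrable (fun ω => (n : ℝ)⁻¹ * ∑ i, y i ω
      - (n : ℝ)⁻¹ ^ 2 * ∑ i, ∑ j, g (z j ω) * g (z i ω) * y j ω) P := hI1.sub hI2
  -- the three integrals
  have e1 : ∫ ω, (n : ℝ)⁻¹ * ∑ i, y i ω ∂P = (n : ℝ)⁻¹ * ((n : ℝ) * μ) := by
    rw [integral_const_mul, integral_finset_sum _ (fun i _ => hyint i),
      Finset.sum_congr rfl (fun i _ => Ey i), Finset.sum_const, hcard, nsmul_eq_mul]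
  have e2 : ∫ ω, (n : ℝ)⁻¹ ^ 2 * ∑ i, ∑ j, g (z j ω) * g (z i ω) * y j ω ∂P
      = (n : ℝ)⁻¹ ^ 2 * ((n : ℝ) * A) := by
    rw [integral_const_mul,
      integral_finset_sum _ (fun i _ => integrable_finset_sum _ fun j _ => hint3 j i j),
      Finset.sum_congr rfl (fun i _ => hrow2 i), Finset.sum_const, hcard, nsmul_eq_mul]
  have e3 : ∫ ω, (n : ℝ)⁻¹ ^ 3 * ∑ i, ∑ j, ∑ k, g (z j ω) * g (z i ω) * y k ω ∂P
      = (n : ℝ)⁻¹ ^ 3 * ((n : ℝ) * (A + ((n : ℝ) - 1) * (B * μ))) := by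
    rw [integral_const_mul,
      integral_finset_sum _ (fun i _ => integrable_finset_sum _ fun j _ =>
        integrable_finset_sum _ fun k _ => hint3 j i k),
      Finset.sum_congr rfl (fun i _ => hrow3 i), Finset.sum_const, hcard, nsmul_eq_mul]
  -- pointwise rewriting of the integrand
  have key : ∀ ω, ((n : ℝ)⁻¹ * ∑ i,
        (y i ω
          - ((n : ℝ)⁻¹ * ∑ j, (y j ω - (n : ℝ)⁻¹ * ∑ k, y k ω) * g (z j ω))
            * g (z i ω)))
      = ((n : ℝ)⁻¹ * ∑ i, y i ω
          - (n : ℝ)⁻¹ ^ 2 * ∑ i, ∑ j, g (z j ω) * g (z i ω) * y j ω)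
        + (n : ℝ)⁻¹ ^ 3 * ∑ i, ∑ j, ∑ k, g (z j ω) * g (z i ω) * y k ω := by
    intro ω
    simp only [sub_mul, mul_sub, Finset.sum_sub_distrib, Finset.sum_mul, Finset.mul_sum]
    ring_nf
    congr 1
    · congr 1
      exact Finset.sum_congr rfl fun i _ => Finset.sum_congr rfl fun j _ => by ring
    · exact Finset.sum_congr rfl fun i _ => Finset.sum_congr rfl fun j _ =>
        Finset.sum_congr rfl fun k _ => by ring
  rw [integral_congr_ae (Filter.EventuallyEq.of_eq (funext key)),
    integral_add hI12 hI3, integral_sub hI1 hI2, e1, e2, e3]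
  have hn' : (n : ℝ) ≠ 0 := Nat.cast_ne_zero.mpr hn.ne'
  rw [hA, hB]
  field_simp
  ring
end
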